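/- Let G be a nilpotent group of class at most 2 (i.e., G' ⊆ Z(G)). Then IA(G)*, the group of IA-automorphisms of G that fix the center Z(G) elementwise, is isomorphic to Hom(G/Z(G), G'). -/

import Mathlib

/-- The group of IA-automorphisms of `G` fixing the center elementwise. -/
def IAstar (G : Type*) [Group G] : Subgroup (MulAut G) where
  carrier := {α | (∀ g : G, g⁻¹ * α g ∈ commutator G) ∧ ∀ z ∈ Subgroup.center G, α z = z}
  one_mem' := by
    constructor
    · intro g; simp
    · intro z _; rfl
  mul_mem' := by
    rintro α β ⟨hα, hα'⟩ ⟨hβ, hβ'⟩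
    constructor
    · intro g
      have h : g⁻¹ * (α * β) g = (g⁻¹ * β g) * ((β g)⁻¹ * α (β g)) := by
        simp [MulAut.mul_apply, mul_assoc]
      rw [h]
      exact mul_mem (hβ g) (hα (β g))
    · intro z hz
      simp [MulAut.mul_apply, hβ' z hz, hα' z hz]
  inv_mem' := by
    rintro α ⟨hα, hα'⟩
    constructor
    · intro g
      have h := hα (α⁻¹ g)
      rw [MulAut.apply_inv_self] at h
      simpa using inv_mem h
    · intro z hz
      have h := congrArg (fun x => α⁻¹ x) (hα' z hz)
      simp only [MulAut.inv_apply_self] at h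
      exact h.symm

/-- A subgroup contained in the center is a commutative group. -/
@[reducible]
def centralCommGroup {G : Type*} [Group G] {H : Subgroup G}
    (h : H ≤ Subgroup.center G) : CommGroup H :=
  { (inferInstance : Group H) with
    mul_comm := fun a b => Subtype.ext (by
      simpa using ((Subgroup.mem_center_iff.mp (h a.2)) (b : G)).symm) }

/-!
If `G' ≤ Z(G)`, the displacement `g ↦ g⁻¹ * α g` of an IA-automorphism `α` takes central values,
hence is a homomorphism `G → G'`; it kills `Z(G)` exactly when `α` fixes the center. Conversely a
homomorphism `f : G ⧸ Z(G) → G'` defines the automorphism `g ↦ g * f ⟦g⟧`, whose inverse is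
`g ↦ g * (f ⟦g⟧)⁻¹` because `g` and `g * f ⟦g⟧` have the same class modulo the center. Composition
of automorphisms becomes pointwise multiplication of displacements, since `α` fixes the central
displacement of `β`.
-/

section CentralDisplacement

open Subgroup

variable {G : Type*} [Group G]

theorem inv_mul_mul_apply_eq_of_map_eq {α β : MulAut G} {g : G}
    (h : α (g⁻¹ * β g) = g⁻¹ * β g) :
    g⁻¹ * (α * β) g = (g⁻¹ * α g) * (g⁻¹ * β g) := by
  calc g⁻¹ * (α * β) g = g⁻¹ * α (g * (g⁻¹ * β g)) := by simp
    _ = (g⁻¹ * α g) * (g⁻¹ * β g) := by rw [map_mul, h, mul_assoc]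

variable {H : Subgroup G}

def displacementHom (hH : H ≤ center G) (α : MulAut G) (hα : ∀ g, g⁻¹ * α g ∈ H)
    (hαZ : ∀ z ∈ center G, α z = z) : G ⧸ center G →* H :=
  QuotientGroup.lift (center G)
    { toFun := fun g => ⟨g⁻¹ * α g, hα g⟩
      map_one' := Subtype.ext (by simp)
      map_mul' := fun g h => Subtype.ext <| by
        have hcomm : h⁻¹ * (g⁻¹ * α g) = (g⁻¹ * α g) * h⁻¹ :=
          mem_center_iff.mp (hH (hα g)) h⁻¹
        calc (g * h)⁻¹ * α (g * h) = h⁻¹ * (g⁻¹ * α g) * α h := by simp [mul_assoc]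
          _ = (g⁻¹ * α g) * (h⁻¹ * α h) := by rw [hcomm, mul_assoc] }
    (fun z hz => Subtype.ext (by simp [hαZ z hz]))

@[simp]
theorem coe_displacementHom_mk (hH : H ≤ center G) (α : MulAut G) (hα : ∀ g, g⁻¹ * α g ∈ H)
    (hαZ : ∀ z ∈ center G, α z = z) (g : G) :
    (displacementHom hH α hα hαZ g : G) = g⁻¹ * α g :=
  rfl

def centralTwist (hH : H ≤ center G) (f : G ⧸ center G →* H) : MulAut G where
  toFun g := g * f g
  invFun g := g * (f g : G)⁻¹
  left_inv g := by
    simp only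
    rw [QuotientGroup.mk_mul_of_mem g (hH (f g).2), mul_inv_cancel_right]
  right_inv g := by
    simp only
    rw [QuotientGroup.mk_mul_of_mem g (inv_mem (hH (f g).2)), inv_mul_cancel_right]
  map_mul' g h := by
    have hcomm : h * f g = (f g : G) * h := mem_center_iff.mp (hH (f g).2) h
    simp only [QuotientGroup.mk_mul, map_mul, coe_mul]
    rw [mul_assoc g h, ← mul_assoc h, hcomm]
    simp only [mul_assoc]

@[simp]
theorem centralTwist_apply (hH : H ≤ center G) (f : G ⧸ center G →* H) (g : G) :
    centralTwist hH f g = g * f g :=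
  rfl

theorem centralTwist_displacementHom (hH : H ≤ center G) (α : MulAut G)
    (hα : ∀ g, g⁻¹ * α g ∈ H) (hαZ : ∀ z ∈ center G, α z = z) :
    centralTwist hH (displacementHom hH α hα hαZ) = α :=
  MulEquiv.ext fun g => by simp

theorem displacementHom_centralTwist (hH : H ≤ center G) (f : G ⧸ center G →* H)
    (hα : ∀ g, g⁻¹ * centralTwist hH f g ∈ H)
    (hαZ : ∀ z ∈ center G, centralTwist hH f z = z) :
    displacementHom hH (centralTwist hH f) hα hαZ = f :=
  QuotientGroup.monoidHom_ext _ <| MonoidHom.ext fun g => Subtype.ext (by simp)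

theorem centralTwist_mem_IAstar (h2 : commutator G ≤ center G)
    (f : G ⧸ center G →* commutator G) : centralTwist h2 f ∈ IAstar G :=
  ⟨fun g => by simp, fun z hz => by simp [(QuotientGroup.eq_one_iff z).mpr hz]⟩

end CentralDisplacement

theorem IAstar_iso_hom_central_quotient_commutator (G : Type*) [Group G]
    (h2 : commutator G ≤ Subgroup.center G) :
    letI : CommGroup (commutator G) := centralCommGroup h2
    Nonempty (IAstar G ≃* ((G ⧸ Subgroup.center G) →* commutator G)) := by
  let _ : CommGroup (commutator G) := centralCommGroup h2
  refine ⟨{ toFun := fun α => displacementHom h2 α.1 α.2.1 α.2.2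
            invFun := fun f => ⟨centralTwist h2 f, centralTwist_mem_IAstar h2 f⟩
            left_inv := fun α => Subtype.ext (centralTwist_displacementHom h2 α.1 α.2.1 α.2.2)
            right_inv := fun f => displacementHom_centralTwist h2 f _ _
            map_mul' := fun α β => ?_ }⟩
  refine QuotientGroup.monoidHom_ext _ <| MonoidHom.ext fun g => Subtype.ext ?_
  exact inv_mul_mul_apply_eq_of_map_eq (α.2.2 _ (h2 (β.2.1 g)))
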